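/- Let p ∈ (0,1), α > 1, and 𝛉 = (θ₁,…,θₙ) ∈ (0,∞)ⁿ. Then the worst-case Value-at-Risk for Pareto marginals satisfies (∑ᵢθᵢ)/(1−p)^{1/α} ≤ V̄aR_p(𝐏_{α,𝛉}) ≤ (α/(α−1)) · (∑ᵢθᵢ)/(1−p)^{1/α}. -/

import Mathlib

open MeasureTheory
open scoped ENNReal BigOperators

noncomputable section

/-- The `f`-aggregation set: laws of `f (X₁,…,Xₙ)` over all couplings with marginals `F`. -/
def aggSetF (n : ℕ) (f : (Fin n → ℝ) → ℝ) (F : Fin n → Measure ℝ) : Set (Measure ℝ) :=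
  {H | ∃ μ : Measure (Fin n → ℝ), IsProbabilityMeasure μ ∧
    (∀ i, μ.map (fun x => x i) = F i) ∧ H = μ.map f}

/-- The aggregation set for sums. -/
def aggSet (n : ℕ) (F : Fin n → Measure ℝ) : Set (Measure ℝ) :=
  aggSetF n (fun x => ∑ i, x i) F

/-- A symmetric function on `ℝⁿ`. -/
def IsSymmetricFn (n : ℕ) (f : (Fin n → ℝ) → ℝ) : Prop :=
  ∀ (π : Equiv.Perm (Fin n)) (x : Fin n → ℝ), f (x ∘ π) = f x

/-- Left-continuous quantile function of a measure on ℝ. -/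
def quantile (F : Measure ℝ) (p : ℝ) : ℝ :=
  sInf {x : ℝ | p ≤ (F (Set.Iic x)).toReal}

/-- The uniform probability measure on (0,1). -/
def uniform01 : Measure ℝ := volume.restrict (Set.Ioo (0 : ℝ) 1)

/-- Comonotonic sum F₁ ⊕ ⋯ ⊕ Fₙ : the law of ∑ Fᵢ⁻¹(U), U uniform on (0,1). -/
def comonoSum (n : ℕ) (F : Fin n → Measure ℝ) : Measure ℝ :=
  uniform01.map (fun u => ∑ i, quantile (F i) u)

/-- Convex order F ≺cx G. -/
def ConvexOrder (F G : Measure ℝ) : Prop :=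
  ∀ φ : ℝ → ℝ, ConvexOn ℝ Set.univ φ → Integrable φ F → Integrable φ G →
    ∫ x, φ x ∂F ≤ ∫ x, φ x ∂G

/-- Stochastic order F ≺st G, i.e. F((-∞,x]) ≥ G((-∞,x]) for all x. -/
def StOrder (F G : Measure ℝ) : Prop :=
  ∀ x : ℝ, G (Set.Iic x) ≤ F (Set.Iic x)

/-- Doubly stochastic matrix. -/
def DoublyStochastic {n : ℕ} (Λ : Matrix (Fin n) (Fin n) ℝ) : Prop :=
  (∀ i j, 0 ≤ Λ i j) ∧ (∀ i, ∑ j, Λ i j = 1) ∧ (∀ j, ∑ i, Λ i j = 1)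

/-- Distribution mixture Λ𝐅 : i-th component is ∑ⱼ Λᵢⱼ Fⱼ. -/
def distMix {n : ℕ} (Λ : Matrix (Fin n) (Fin n) ℝ) (F : Fin n → Measure ℝ) :
    Fin n → Measure ℝ :=
  fun i => ∑ j, ENNReal.ofReal (Λ i j) • F j

/-- Quantile mixture Λ⊗𝐅 : i-th component is the law of ∑ⱼ Λᵢⱼ Fⱼ⁻¹(U). -/
def quantileMix {n : ℕ} (Λ : Matrix (Fin n) (Fin n) ℝ) (F : Fin n → Measure ℝ) :
    Fin n → Measure ℝ :=
  fun i => uniform01.map (fun u => ∑ j, Λ i j * quantile (F j) u)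

/-- Worst-case value of a risk measure over the aggregation set, valued in EReal. -/
def worstCase (ρ : Measure ℝ → ℝ) (n : ℕ) (F : Fin n → Measure ℝ) : EReal :=
  sSup ((fun H => ((ρ H : ℝ) : EReal)) '' aggSet n F)

/-- Worst-case Value-at-Risk over the aggregation set, valued in EReal. -/
def worstVaR (p : ℝ) (n : ℕ) (F : Fin n → Measure ℝ) : EReal :=
  sSup ((fun G => ((quantile G p : ℝ) : EReal)) '' aggSet n F)

/-- The class M_D of distributions with a nonincreasing density on an interval support. -/
def MemMD (F : Measure ℝ) : Prop :=
  ∃ f : ℝ → ℝ, Measurable f ∧ (∀ x, 0 ≤ f x) ∧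
    F = volume.withDensity (fun x => ENNReal.ofReal (f x)) ∧
    ∃ s : Set ℝ, s.OrdConnected ∧ (∀ x, x ∉ s → f x = 0) ∧
      (∀ x ∈ s, ∀ y ∈ s, x ≤ y → f y ≤ f x)

/-- The class M_I of distributions with a nondecreasing density on an interval support. -/
def MemMI (F : Measure ℝ) : Prop :=
  ∃ f : ℝ → ℝ, Measurable f ∧ (∀ x, 0 ≤ f x) ∧
    F = volume.withDensity (fun x => ENNReal.ofReal (f x)) ∧
    ∃ s : Set ℝ, s.OrdConnected ∧ (∀ x, x ∉ s → f x = 0) ∧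
      (∀ x ∈ s, ∀ y ∈ s, x ≤ y → f x ≤ f y)

/-- Pareto(α, θ) distribution, via its Lebesgue density α θ^α x^{-(α+1)} on [θ, ∞). -/
def pareto (α θ : ℝ) : Measure ℝ :=
  volume.withDensity
    (fun x => if θ ≤ x then ENNReal.ofReal (α * θ ^ α / x ^ (α + 1)) else 0)

/-- A monotone risk measure (w.r.t. stochastic order, on probability measures). -/
def MonotoneRisk (ρ : Measure ℝ → ℝ) : Prop :=
  ∀ F G : Measure ℝ, IsProbabilityMeasure F → IsProbabilityMeasure G →
    StOrder F G → ρ F ≤ ρ G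

/-- A risk measure consistent with convex order (on finite-mean probability measures). -/
def CxConsistentRisk (ρ : Measure ℝ → ℝ) : Prop :=
  ∀ F G : Measure ℝ, IsProbabilityMeasure F → IsProbabilityMeasure G →
    Integrable id F → Integrable id G → ConvexOrder F G → ρ F ≤ ρ G

/-- Uniform distribution on [a,b]. -/
def unifOn (a b : ℝ) : Measure ℝ :=
  (ENNReal.ofReal (b - a))⁻¹ • volume.restrict (Set.Icc a b)

/-- Bernoulli distribution with parameter p, as a measure on ℝ. -/
def bern (p : ℝ) : Measure ℝ :=
  ENNReal.ofReal (1 - p) • Measure.dirac (0 : ℝ) + ENNReal.ofReal p • Measure.dirac (1 : ℝ)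

/-- The set C(𝐅) of finite-mean distributions dominated by the comonotonic sum in convex order. -/
def CSet (n : ℕ) (F : Fin n → Measure ℝ) : Set (Measure ℝ) :=
  {G | IsProbabilityMeasure G ∧ Integrable id G ∧ ConvexOrder G (comonoSum n F)}

/-!
Lower bound: in the comonotonic coupling `Xᵢ = θᵢ (1 - U)^(-1/α)` with `U` uniform on `(0,1)`,
the sum `(∑ θᵢ) (1 - U)^(-1/α)` is again Pareto, with `p`-quantile `(∑ θᵢ) / (1 - p)^(1/α)`.

Upper bound: put `q = (1 - p)^(1/α)` and `T = ∑ θᵢ / q`, the sum of the marginal `p`-quantiles.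
For every coupling, `E (S - T)⁺ ≤ ∑ E (Xᵢ - θᵢ / q)⁺ = (1 - p) T / (α - 1)`, so Markov's
inequality gives `P (S > T + T / (α - 1)) ≤ 1 - p`, and `T + T / (α - 1) = α / (α - 1) * T`.
-/

open Set

section Pareto

variable {α θ : ℝ}

lemma pareto_Ioi (hα : 0 < α) (hθ : 0 < θ) {t : ℝ} (ht : θ ≤ t) :
    pareto α θ (Ioi t) = ENNReal.ofReal ((θ / t) ^ α) := by
  have ht0 : 0 < t := hθ.trans_le ht
  have hdens : EqOn (fun x => if θ ≤ x then ENNReal.ofReal (α * θ ^ α / x ^ (α + 1)) else 0)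
      (fun x => ENNReal.ofReal (α * θ ^ α * x ^ (-(α + 1)))) (Ioi t) := fun x hx => by
    dsimp only
    rw [if_pos (ht.trans hx.le), Real.rpow_neg (ht0.trans hx).le, div_eq_mul_inv]
  have hint : IntegrableOn (fun x : ℝ => α * θ ^ α * x ^ (-(α + 1))) (Ioi t) :=
    (integrableOn_Ioi_rpow_of_lt (by linarith) ht0).const_mul _
  rw [pareto, withDensity_apply _ measurableSet_Ioi,
    setLIntegral_congr_fun measurableSet_Ioi hdens, ← ofReal_integral_eq_lintegral_ofReal hint, integral_const_mul,
    integral_Ioi_rpow_of_lt (by linarith) ht0, Real.div_rpow hθ.le ht0.le]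
  · congr 1
    rw [show -(α + 1) + 1 = -α by ring, Real.rpow_neg ht0.le]
    field_simp
  · filter_upwards [ae_restrict_mem measurableSet_Ioi] with x hx
    have := ht0.trans hx
    positivity

lemma pareto_Iio : pareto α θ (Iio θ) = 0 := by
  rw [pareto, withDensity_apply _ measurableSet_Iio,
    setLIntegral_congr_fun measurableSet_Iio (fun x (hx : x < θ) => if_neg (not_le.2 hx))]
  simp

lemma isProbabilityMeasure_pareto (hα : 0 < α) (hθ : 0 < θ) :
    IsProbabilityMeasure (pareto α θ) := by
  have hIci : pareto α θ (Ici θ) = 1 := by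
    have hac : pareto α θ ≪ volume := withDensity_absolutelyContinuous _ _
    rw [measure_congr (hac.ae_eq Ioi_ae_eq_Ici).symm,
      pareto_Ioi hα hθ le_rfl, div_self hθ.ne', Real.one_rpow, ENNReal.ofReal_one]
  constructor
  rw [← Iio_union_Ici, measure_union (Iio_disjoint_Ici le_rfl) measurableSet_Ici, pareto_Iio,
    hIci, zero_add]

lemma pareto_Iic (hα : 0 < α) (hθ : 0 < θ) {x : ℝ} (hx : θ ≤ x) :
    pareto α θ (Iic x) = ENNReal.ofReal (1 - (θ / x) ^ α) := by
  have := isProbabilityMeasure_pareto hα hθ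
  have hx0 : 0 < x := hθ.trans_le hx
  have h1 : (θ / x) ^ α ≤ 1 := Real.rpow_le_one (by positivity) ((div_le_one hx0).2 hx) hα.le
  rw [← compl_Ioi, prob_compl_eq_one_sub measurableSet_Ioi, pareto_Ioi hα hθ hx,
    ENNReal.ofReal_sub _ (by positivity), ENNReal.ofReal_one]

lemma pareto_Iic_of_lt {x : ℝ} (hx : x < θ) : pareto α θ (Iic x) = 0 :=
  measure_mono_null (Iic_subset_Iio.2 hx) pareto_Iio

lemma lintegral_pareto_stopLoss {t : ℝ} (hα : 1 < α) (hθ : 0 < θ) (ht : θ ≤ t) :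
    ∫⁻ y, ENNReal.ofReal (max (y - t) 0) ∂pareto α θ
      = ENNReal.ofReal (t * (θ / t) ^ α / (α - 1)) := by
  have hα0 : 0 < α := by linarith
  have ht0 : 0 < t := hθ.trans_le ht
  have hlevel : ∀ s ∈ Ioi (0 : ℝ), pareto α θ {y | s < max (y - t) 0}
      = ENNReal.ofReal ((θ / (s + t)) ^ α) := fun s (hs : 0 < s) => by
    rw [← pareto_Ioi hα0 hθ (by linarith)]
    congr 1
    ext y
    simp only [mem_ofPred_eq, lt_max_iff, mem_Ioi]
    exact ⟨by rintro (h | h) <;> linarith, fun h => Or.inl (by linarith)⟩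
  have hshift := (measurePreserving_add_right volume t).setLIntegral_comp_preimage
    (measurableSet_Ioi (a := t)) (f := fun y => ENNReal.ofReal ((θ / y) ^ α)) (by fun_prop)
  rw [preimage_add_const_Ioi, sub_self] at hshift
  have hint : IntegrableOn (fun y : ℝ => θ ^ α * y ^ (-α)) (Ioi t) :=
    (integrableOn_Ioi_rpow_of_lt (by linarith) ht0).const_mul _
  have htail : EqOn (fun y => ENNReal.ofReal ((θ / y) ^ α))
      (fun y => ENNReal.ofReal (θ ^ α * y ^ (-α))) (Ioi t) := fun y (hy : t < y) => by
    dsimp only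
    rw [Real.div_rpow hθ.le (ht0.trans hy).le, Real.rpow_neg (ht0.trans hy).le, div_eq_mul_inv]
  rw [lintegral_eq_lintegral_meas_lt (f := fun y => max (y - t) 0) _
      (Filter.Eventually.of_forall fun y => le_max_right (y - t) 0)
      (by fun_prop), setLIntegral_congr_fun measurableSet_Ioi hlevel, hshift,
    setLIntegral_congr_fun measurableSet_Ioi htail,
    ← ofReal_integral_eq_lintegral_ofReal hint, integral_const_mul,
    integral_Ioi_rpow_of_lt (by linarith) ht0]
  · congr 1
    rw [Real.div_rpow hθ.le ht0.le, show -α + 1 = 1 - α by ring, Real.rpow_sub ht0, Real.rpow_one,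
      show (1 : ℝ) - α = -(α - 1) by ring]
    field_simp
  · filter_upwards [ae_restrict_mem measurableSet_Ioi] with y hy
    have := ht0.trans hy
    positivity

end Pareto

instance isProbabilityMeasure_uniform01 : IsProbabilityMeasure uniform01 := by
  constructor
  rw [uniform01, Measure.restrict_apply_univ, Real.volume_Ioo, sub_zero, ENNReal.ofReal_one]

lemma map_uniform01_apply_Iic (g : ℝ → ℝ) (hg : Measurable g) (x : ℝ) :
    uniform01.map g (Iic x) = volume ({u | g u ≤ x} ∩ Ioo 0 1) := by
  rw [Measure.map_apply hg measurableSet_Iic, uniform01,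
    Measure.restrict_apply (hg measurableSet_Iic)]
  rfl

section ParetoQuantileTransform

variable {α θ : ℝ}

lemma div_one_sub_rpow_inv_le_iff (hα : 0 < α) (hθ : 0 ≤ θ) {x u : ℝ} (hx : 0 < x) (hu : u < 1) :
    θ / (1 - u) ^ α⁻¹ ≤ x ↔ (θ / x) ^ α ≤ 1 - u := by
  have hu' : 0 < 1 - u := by linarith
  rw [div_le_comm₀ (Real.rpow_pos_of_pos hu' _) hx,
    Real.le_rpow_inv_iff_of_pos (div_nonneg hθ hx.le) hu'.le hα]

lemma map_uniform01_eq_pareto (hα : 0 < α) (hθ : 0 < θ) :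
    uniform01.map (fun u => θ / (1 - u) ^ α⁻¹) = pareto α θ := by
  have hg : Measurable (fun u : ℝ => θ / (1 - u) ^ α⁻¹) := by fun_prop
  have := Measure.isProbabilityMeasure_map (μ := uniform01) hg.aemeasurable
  refine Measure.ext_of_Iic _ _ fun x => ?_
  rw [map_uniform01_apply_Iic _ hg]
  rcases lt_or_ge x θ with hx | hx
  · rw [pareto_Iic_of_lt hx, ← measure_empty (μ := (volume : Measure ℝ))]
    congr 1
    refine eq_empty_of_forall_notMem fun u ⟨hux, hu0, hu1⟩ => hx.not_ge (le_trans ?_ hux)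
    exact le_div_self hθ.le (Real.rpow_pos_of_pos (by linarith) _)
      (Real.rpow_le_one (by linarith) (by linarith) (inv_nonneg.2 hα.le))
  · rw [pareto_Iic hα hθ hx, ← sub_zero (1 - _), ← Real.volume_Ioc]
    congr 1
    ext u
    simp only [mem_inter_iff, mem_ofPred_eq, mem_Ioo, mem_Ioc]
    have hc : 0 < (θ / x) ^ α := Real.rpow_pos_of_pos (div_pos hθ (hθ.trans_le hx)) _
    constructor
    · rintro ⟨hux, hu0, hu1⟩
      exact ⟨hu0, by linarith [(div_one_sub_rpow_inv_le_iff hα hθ.le (hθ.trans_le hx) hu1).1 hux]⟩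
    · rintro ⟨hu0, huc⟩
      have hu1 : u < 1 := by linarith
      exact ⟨(div_one_sub_rpow_inv_le_iff hα hθ.le (hθ.trans_le hx) hu1).2 (by linarith), hu0, hu1⟩

end ParetoQuantileTransform

section Quantile

variable {G : Measure ℝ} {p B : ℝ}

/-- `quantile` is an `sInf` in `ℝ`, which is `0` for a set that is not bounded below; hence
`0 ≤ B`. -/
lemma quantile_le_of_le_measure_Iic (hB : 0 ≤ B) (h : p ≤ (G (Iic B)).toReal) :
    quantile G p ≤ B := by
  by_cases hb : BddBelow {x : ℝ | p ≤ (G (Iic x)).toReal}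
  · exact csInf_le hb h
  · rw [quantile, Real.sInf_of_not_bddBelow hb]
    exact hB

lemma quantile_le_of_measure_Ioi_le [IsProbabilityMeasure G] (hp : p ≤ 1) (hB : 0 ≤ B)
    (h : G (Ioi B) ≤ ENNReal.ofReal (1 - p)) : quantile G p ≤ B := by
  refine quantile_le_of_le_measure_Iic hB ?_
  have h' := ENNReal.toReal_mono ENNReal.ofReal_ne_top h
  rw [ENNReal.toReal_ofReal (by linarith)] at h'
  rw [← compl_Ioi, prob_compl_eq_one_sub measurableSet_Ioi,
    ENNReal.toReal_sub_of_le prob_le_one ENNReal.one_ne_top, ENNReal.toReal_one]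
  linarith

lemma le_quantile_map_uniform01 {g : ℝ → ℝ} (hg : Measurable g) (hmono : MonotoneOn g (Ioo 0 1))
    (hcont : ContinuousAt g p) (hp : p ∈ Ioo 0 1) : g p ≤ quantile (uniform01.map g) p := by
  have := Measure.isProbabilityMeasure_map (μ := uniform01) hg.aemeasurable
  have hcdf : ∀ x, p ≤ (uniform01.map g (Iic x)).toReal ↔
      ENNReal.ofReal p ≤ volume ({u | g u ≤ x} ∩ Ioo 0 1) := fun x => by
    rw [← map_uniform01_apply_Iic g hg, ENNReal.ofReal_le_iff_le_toReal (measure_ne_top _ _)]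
  refine le_csInf ⟨g p, ?_⟩ fun x hx => ?_
  · show p ≤ _
    rw [hcdf]
    calc ENNReal.ofReal p = volume (Ioc 0 p) := by rw [Real.volume_Ioc, sub_zero]
      _ ≤ _ := by
        refine measure_mono fun u ⟨hu0, hup⟩ => ?_
        exact ⟨hmono ⟨hu0, hup.trans_lt hp.2⟩ hp hup, hu0, hup.trans_lt hp.2⟩
  · by_contra! hxp
    obtain ⟨u', hxu', hu'⟩ := (((hcont.eventually (lt_mem_nhds hxp)).filter_mono
      nhdsWithin_le_nhds).and (Ioo_mem_nhdsLT hp.1)).exists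
    have hsub : {u | g u ≤ x} ∩ Ioo 0 1 ⊆ Ioo 0 u' := fun u ⟨hux, hu0, hu1⟩ =>
      ⟨hu0, lt_of_not_ge fun hu'u =>
        (hux.trans_lt hxu').not_ge (hmono ⟨hu'.1, hu'.2.trans hp.2⟩ ⟨hu0, hu1⟩ hu'u)⟩
    have hpu' := ((hcdf x).1 hx).trans (measure_mono hsub)
    rw [Real.volume_Ioo, sub_zero, ENNReal.ofReal_le_ofReal_iff hu'.1.le] at hpu'
    linarith [hu'.2]

end Quantile

lemma div_rpow_le_quantile_map_uniform01 {α c p : ℝ} (hα : 0 < α) (hc : 0 ≤ c)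
    (hp : p ∈ Ioo 0 1) :
    c / (1 - p) ^ (1 / α) ≤ quantile (uniform01.map fun u => c / (1 - u) ^ α⁻¹) p := by
  have hmono : MonotoneOn (fun u : ℝ => c / (1 - u) ^ α⁻¹) (Ioo 0 1) :=
    fun u ⟨_, hu1⟩ v ⟨_, hv1⟩ huv => div_le_div_of_nonneg_left hc
      (Real.rpow_pos_of_pos (by linarith) _)
      (Real.rpow_le_rpow (by linarith) (by linarith) (inv_nonneg.2 hα.le))
  have hcont : ContinuousAt (fun u : ℝ => c / (1 - u) ^ α⁻¹) p :=
    continuousAt_const.div ((continuousAt_const.sub continuousAt_id).rpow_const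
      (Or.inr (inv_nonneg.2 hα.le))) (Real.rpow_pos_of_pos (by linarith [hp.2]) _).ne'
  rw [one_div]
  exact le_quantile_map_uniform01 (by fun_prop) hmono hcont hp

lemma isProbabilityMeasure_of_mem_aggSet {n : ℕ} {F : Fin n → Measure ℝ} {G : Measure ℝ}
    (hG : G ∈ aggSet n F) : IsProbabilityMeasure G := by
  obtain ⟨μ, hμ, -, rfl⟩ := hG
  exact Measure.isProbabilityMeasure_map (by fun_prop)

lemma lintegral_stopLoss_le_sum_of_mem_aggSet {n : ℕ} {F : Fin n → Measure ℝ} {G : Measure ℝ}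
    (hG : G ∈ aggSet n F) (t : Fin n → ℝ) :
    ∫⁻ y, ENNReal.ofReal (max (y - ∑ i, t i) 0) ∂G
      ≤ ∑ i, ∫⁻ y, ENNReal.ofReal (max (y - t i) 0) ∂F i := by
  obtain ⟨μ, -, hmarg, rfl⟩ := hG
  have hpt : ∀ x : Fin n → ℝ, ENNReal.ofReal (max (∑ i, x i - ∑ i, t i) 0)
      ≤ ∑ i, ENNReal.ofReal (max (x i - t i) 0) := fun x => by
    rw [← ENNReal.ofReal_sum_of_nonneg fun i _ => le_max_right _ _, ← Finset.sum_sub_distrib]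
    exact ENNReal.ofReal_le_ofReal (max_le (Finset.sum_le_sum fun i _ => le_max_left _ _)
      (Finset.sum_nonneg fun i _ => le_max_right _ _))
  calc ∫⁻ y, ENNReal.ofReal (max (y - ∑ i, t i) 0) ∂μ.map (fun x => ∑ i, x i)
      = ∫⁻ x, ENNReal.ofReal (max (∑ i, x i - ∑ i, t i) 0) ∂μ :=
        lintegral_map (by fun_prop) (by fun_prop)
    _ ≤ ∫⁻ x, ∑ i, ENNReal.ofReal (max (x i - t i) 0) ∂μ := lintegral_mono hpt
    _ = ∑ i, ∫⁻ x, ENNReal.ofReal (max (x i - t i) 0) ∂μ :=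
        lintegral_finsetSum _ fun i _ => by fun_prop
    _ = ∑ i, ∫⁻ y, ENNReal.ofReal (max (y - t i) 0) ∂F i := Finset.sum_congr rfl fun i _ => by
        rw [← hmarg i, lintegral_map (by fun_prop) (measurable_pi_apply i)]

lemma ofReal_mul_measure_Ioi_add_le_lintegral_stopLoss (G : Measure ℝ) (T D : ℝ) :
    ENNReal.ofReal D * G (Ioi (T + D)) ≤ ∫⁻ y, ENNReal.ofReal (max (y - T) 0) ∂G := by
  refine le_trans ?_ (mul_meas_ge_le_lintegral₀ (by fun_prop) (ENNReal.ofReal D))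
  gcongr
  exact fun y (hy : T + D < y) => ENNReal.ofReal_le_ofReal (le_max_of_le_left (by linarith))

section ParetoAggregation

variable {n : ℕ} {α : ℝ} {θ : Fin n → ℝ}

lemma map_uniform01_sum_div_mem_aggSet_pareto (hα : 0 < α) (hθ : ∀ i, 0 < θ i) :
    uniform01.map (fun u => (∑ i, θ i) / (1 - u) ^ α⁻¹) ∈ aggSet n fun i => pareto α (θ i) := by
  have hC : Measurable fun u : ℝ => fun i => θ i / (1 - u) ^ α⁻¹ := by fun_prop
  refine ⟨uniform01.map fun u i => θ i / (1 - u) ^ α⁻¹,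
    Measure.isProbabilityMeasure_map hC.aemeasurable, fun i => ?_, ?_⟩
  · rw [Measure.map_map (measurable_pi_apply i) hC]
    exact map_uniform01_eq_pareto hα (hθ i)
  · rw [Measure.map_map (by fun_prop) hC]
    simp only [Function.comp_def, Finset.sum_div]

lemma measure_Ioi_le_of_mem_aggSet_pareto {p : ℝ} {G : Measure ℝ} (hp : p ∈ Ioo 0 1)
    (hα : 1 < α) (hθ : ∀ i, 0 < θ i) (hG : G ∈ aggSet n fun i => pareto α (θ i)) :
    G (Ioi (α / (α - 1) * ((∑ i, θ i) / (1 - p) ^ (1 / α)))) ≤ ENNReal.ofReal (1 - p) := by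
  obtain rfl | hn := Nat.eq_zero_or_pos n
  · obtain ⟨μ, -, -, rfl⟩ := hG
    rw [Measure.map_apply (by fun_prop) measurableSet_Ioi]
    simp
  have hqα : ((1 - p) ^ (1 / α)) ^ α = 1 - p := by
    rw [one_div]
    exact Real.rpow_inv_rpow (by linarith [hp.2]) (by linarith)
  set q := (1 - p) ^ (1 / α)
  have hq : 0 < q := Real.rpow_pos_of_pos (by linarith [hp.2]) _
  have hq1 : q ≤ 1 := Real.rpow_le_one (by linarith [hp.2]) (by linarith [hp.1]) (by positivity)
  have hc : 0 ≤ (1 - p) / (α - 1) := div_nonneg (by linarith [hp.2]) (by linarith)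
  set T := (∑ i, θ i) / q
  have hD : 0 < T / (α - 1) :=
    div_pos (div_pos (Finset.sum_pos (fun i _ => hθ i) ⟨⟨0, hn⟩, Finset.mem_univ _⟩) hq)
      (by linarith)
  have hmarkov : ENNReal.ofReal (T / (α - 1)) * G (Ioi (T + T / (α - 1)))
      ≤ ENNReal.ofReal (T / (α - 1)) * ENNReal.ofReal (1 - p) := calc
    _ ≤ ∫⁻ y, ENNReal.ofReal (max (y - T) 0) ∂G :=
        ofReal_mul_measure_Ioi_add_le_lintegral_stopLoss G T _
    _ ≤ ∑ i, ∫⁻ y, ENNReal.ofReal (max (y - θ i / q) 0) ∂pareto α (θ i) := by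
        simpa only [T, Finset.sum_div] using
          lintegral_stopLoss_le_sum_of_mem_aggSet hG fun i => θ i / q
    _ = ∑ i, ENNReal.ofReal (θ i / q * ((1 - p) / (α - 1))) :=
        Finset.sum_congr rfl fun i _ => by
          rw [lintegral_pareto_stopLoss hα (hθ i) (le_div_self (hθ i).le hq hq1),
            div_div_cancel₀ (hθ i).ne', hqα, mul_div_assoc]
    _ = ENNReal.ofReal (T / (α - 1)) * ENNReal.ofReal (1 - p) := by
        rw [← ENNReal.ofReal_sum_of_nonneg fun i _ => mul_nonneg (div_nonneg (hθ i).le hq.le) hc,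
          ← ENNReal.ofReal_mul hD.le, ← Finset.sum_mul, ← Finset.sum_div]
        simp only [T]
        congr 1
        ring
  have hB : α / (α - 1) * T = T + T / (α - 1) := by
    field_simp [(sub_pos.2 hα).ne']
    ring
  rw [hB]
  exact (ENNReal.mul_le_mul_iff_right (ENNReal.ofReal_pos.2 hD).ne' ENNReal.ofReal_ne_top).1
    hmarkov

end ParetoAggregation

/-- Proposition A.1(v): bounds on the worst-case VaR for Pareto marginals, α > 1. -/
theorem stmt19 (n : ℕ) (p : ℝ) (hp : p ∈ Set.Ioo (0 : ℝ) 1)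
    (α : ℝ) (hα : 1 < α) (θ : Fin n → ℝ) (hθ : ∀ i, 0 < θ i) :
    (((∑ i, θ i) / (1 - p) ^ (1 / α) : ℝ) : EReal) ≤
        worstVaR p n (fun i => pareto α (θ i)) ∧
      worstVaR p n (fun i => pareto α (θ i)) ≤
        ((α / (α - 1) * ((∑ i, θ i) / (1 - p) ^ (1 / α)) : ℝ) : EReal) := by
  have hα0 : 0 < α := by linarith
  have hΘ : 0 ≤ ∑ i, θ i := Finset.sum_nonneg fun i _ => (hθ i).le
  refine ⟨?_, sSup_le ?_⟩
  · exact (EReal.coe_le_coe_iff.2 (div_rpow_le_quantile_map_uniform01 hα0 hΘ hp)).trans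
      (le_sSup ⟨_, map_uniform01_sum_div_mem_aggSet_pareto hα0 hθ, rfl⟩)
  · rintro _ ⟨G, hG, rfl⟩
    have := isProbabilityMeasure_of_mem_aggSet hG
    have hB : 0 ≤ α / (α - 1) * ((∑ i, θ i) / (1 - p) ^ (1 / α)) :=
      mul_nonneg (div_nonneg hα0.le (sub_pos.2 hα).le)
        (div_nonneg hΘ (Real.rpow_nonneg (sub_pos.2 hp.2).le _))
    exact EReal.coe_le_coe_iff.2 <|
      quantile_le_of_measure_Ioi_le hp.2.le hB (measure_Ioi_le_of_mem_aggSet_pareto hp hα hθ hG)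

end
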